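/- arXiv:1205.5824 — 2 statements merged into one kernel-verified Lean document; each statement's English description precedes it below -/
import Mathlib

section
/- Let E be symmetric positive-definite, Ă a real n×n matrix with EĂ symmetric, and G an n×k matrix of full column rank. Then the largest eigenvalue of the reduced generalized eigenproblem (GᵀEĂG)v = λ(GᵀEG)v is at most the largest eigenvalue of the full generalized eigenproblem EĂw = λEw, and the smallest eigenvalue of the reduced problem is at least the smallest of the full problem. -/
/-!
With `R = E^{1/2}`, the full problem `EĂ w = λ E w` is the symmetric eigenproblem for
`S = R⁻¹ (EĂ) R⁻¹`, so its largest and smallest eigenvalues bound the generalized Rayleigh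
quotient `xᵀEĂx / xᵀEx` for every `x ≠ 0`. A reduced eigenvalue `μ` is this quotient at `x = G v`.
-/

open Matrix
open scoped MatrixOrder

theorem Matrix.dotProduct_mulVec_transpose_mul_mul {α m n : Type*} [CommSemiring α] [Fintype m]
    [Fintype n] (S : Matrix m m α) (B : Matrix m n α) (x : n → α) :
    x ⬝ᵥ (Bᵀ * S * B) *ᵥ x = (B *ᵥ x) ⬝ᵥ S *ᵥ (B *ᵥ x) := by
  rw [Matrix.mul_assoc, ← mulVec_mulVec, dotProduct_mulVec, vecMul_transpose, mulVec_mulVec]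

variable {ι : Type*} [Fintype ι] [DecidableEq ι]

namespace Matrix.IsHermitian

theorem dotProduct_mulVec_le_of_eigenvalues_le {S : Matrix ι ι ℝ} (hS : S.IsHermitian) {c : ℝ}
    (hc : ∀ i, hS.eigenvalues i ≤ c) (x : ι → ℝ) : x ⬝ᵥ S *ᵥ x ≤ c * (x ⬝ᵥ x) := by
  have hle : S ≤ algebraMap ℝ _ c := le_algebraMap_of_spectrum_le fun r hr => by
    obtain ⟨i, rfl⟩ := hS.spectrum_real_eq_range_eigenvalues ▸ hr
    exact hc i
  have := (le_iff.mp hle).dotProduct_mulVec_nonneg x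
  simp only [star_trivial, Algebra.algebraMap_eq_smul_one, sub_mulVec, smul_mulVec, one_mulVec,
    dotProduct_sub, dotProduct_smul, smul_eq_mul] at this
  linarith

theorem exists_eigenvector_dotProduct_mulVec_le [Nonempty ι] {S : Matrix ι ι ℝ}
    (hS : S.IsHermitian) :
    ∃ (lam : ℝ) (u : ι → ℝ), u ≠ 0 ∧ S *ᵥ u = lam • u ∧
      ∀ x, x ⬝ᵥ S *ᵥ x ≤ lam * (x ⬝ᵥ x) := by
  obtain ⟨i, hi⟩ := Finite.exists_max hS.eigenvalues
  refine ⟨hS.eigenvalues i, hS.eigenvectorBasis i, fun h => ?_, hS.mulVec_eigenvectorBasis i,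
    hS.dotProduct_mulVec_le_of_eigenvalues_le hi⟩
  exact (hS.eigenvectorBasis.orthonormal.ne_zero i) (WithLp.ofLp_injective _ h)

end Matrix.IsHermitian

namespace Matrix.PosDef

theorem exists_generalized_eigenvector_dotProduct_mulVec_le [Nonempty ι]
    {E M : Matrix ι ι ℝ} (hE : E.PosDef) (hM : M.IsHermitian) :
    ∃ (lam : ℝ) (w : ι → ℝ), w ≠ 0 ∧ M *ᵥ w = lam • E *ᵥ w ∧
      ∀ x, x ⬝ᵥ M *ᵥ x ≤ lam * (x ⬝ᵥ E *ᵥ x) := by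
  set R := CFC.sqrt E
  have hRT : Rᵀ = R := by
    simpa [conjTranspose_eq_transpose_of_trivial] using
      (CFC.sqrt_nonneg E).posSemidef.isHermitian.eq
  have hRdet : IsUnit R.det :=
    (isUnit_iff_isUnit_det R).1 (CFC.isUnit_sqrt_iff_isStrictlyPositive.2 hE.isStrictlyPositive)
  have hRinv : R * R⁻¹ = 1 := mul_nonsing_inv R hRdet
  have hinvR : R⁻¹ * R = 1 := nonsing_inv_mul R hRdet
  have hE' : E = Rᵀ * 1 * R := by
    rw [hRT, Matrix.mul_one, CFC.sqrt_mul_sqrt_self E hE.posSemidef.nonneg]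
  set S := R⁻¹ᵀ * M * R⁻¹
  have hS : S.IsHermitian := by
    simpa [conjTranspose_eq_transpose_of_trivial] using isHermitian_conjTranspose_mul_mul R⁻¹ hM
  have hM' : M = Rᵀ * S * R := by
    simp only [S, hRT, transpose_nonsing_inv, Matrix.mul_assoc, hinvR, Matrix.mul_one]
    rw [← Matrix.mul_assoc, hRinv, Matrix.one_mul]
  obtain ⟨lam, u, hu, hSu, hle⟩ := hS.exists_eigenvector_dotProduct_mulVec_le
  have hRw : R *ᵥ (R⁻¹ *ᵥ u) = u := by rw [mulVec_mulVec, hRinv, one_mulVec]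
  refine ⟨lam, R⁻¹ *ᵥ u, fun h => hu (by rw [← hRw, h, mulVec_zero]), ?_, fun x => ?_⟩
  · rw [hM', hE', ← mulVec_mulVec, hRw, ← mulVec_mulVec, hSu, Matrix.mul_one, ← mulVec_mulVec,
      hRw, mulVec_smul]
  · calc x ⬝ᵥ M *ᵥ x = (R *ᵥ x) ⬝ᵥ S *ᵥ (R *ᵥ x) := by
          rw [hM', dotProduct_mulVec_transpose_mul_mul S R x]
      _ ≤ lam * ((R *ᵥ x) ⬝ᵥ (R *ᵥ x)) := hle _
      _ = lam * (x ⬝ᵥ E *ᵥ x) := by rw [hE', dotProduct_mulVec_transpose_mul_mul 1 R x, one_mulVec]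

theorem exists_generalized_eigenvector_le_dotProduct_mulVec [Nonempty ι]
    {E M : Matrix ι ι ℝ} (hE : E.PosDef) (hM : M.IsHermitian) :
    ∃ (lam : ℝ) (w : ι → ℝ), w ≠ 0 ∧ M *ᵥ w = lam • E *ᵥ w ∧
      ∀ x, lam * (x ⬝ᵥ E *ᵥ x) ≤ x ⬝ᵥ M *ᵥ x := by
  obtain ⟨lam, w, hw, hMw, hle⟩ := hE.exists_generalized_eigenvector_dotProduct_mulVec_le hM.neg
  refine ⟨-lam, w, hw, ?_, fun x => ?_⟩
  · rw [neg_smul, ← neg_eq_iff_eq_neg, ← neg_mulVec, hMw]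
  · have := hle x
    rw [neg_mulVec, dotProduct_neg] at this
    linarith

end Matrix.PosDef

theorem reduced_eigenvalues_bounded_by_full_general
    {n k : ℕ} (E A : Matrix (Fin n) (Fin n) ℝ) (G : Matrix (Fin n) (Fin k) ℝ)
    (hE : E.PosDef) (hEA : (E * A).IsSymm)
    (hG : ∀ u : Fin k → ℝ, G.mulVec u = 0 → u = 0) :
    ∀ (μ : ℝ) (v : Fin k → ℝ), v ≠ 0 →
      (Gᵀ * E * A * G).mulVec v = μ • (Gᵀ * E * G).mulVec v →
      (∃ (lam : ℝ) (w : Fin n → ℝ), w ≠ 0 ∧ (E * A).mulVec w = lam • E.mulVec w ∧ μ ≤ lam) ∧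
      (∃ (lam' : ℝ) (w' : Fin n → ℝ), w' ≠ 0 ∧ (E * A).mulVec w' = lam' • E.mulVec w' ∧ lam' ≤ μ) := by
  intro μ v hv hred
  have hg : G *ᵥ v ≠ 0 := fun h => hv (hG v h)
  have : Nonempty (Fin n) := not_isEmpty_iff.1 fun _ => hg (Subsingleton.elim _ _)
  have hpos : 0 < (G *ᵥ v) ⬝ᵥ E *ᵥ (G *ᵥ v) := by
    simpa using hE.dotProduct_mulVec_pos hg
  have hμ : (G *ᵥ v) ⬝ᵥ (E * A) *ᵥ (G *ᵥ v) = μ * ((G *ᵥ v) ⬝ᵥ E *ᵥ (G *ᵥ v)) := by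
    rw [← dotProduct_mulVec_transpose_mul_mul, ← dotProduct_mulVec_transpose_mul_mul,
      ← Matrix.mul_assoc, hred, dotProduct_smul, smul_eq_mul]
  have hM : (E * A).IsHermitian := isHermitian_iff_isSymm.2 hEA
  obtain ⟨lam, w, hw, hwE, hle⟩ := hE.exists_generalized_eigenvector_dotProduct_mulVec_le hM
  obtain ⟨lam', w', hw', hwE', hge⟩ := hE.exists_generalized_eigenvector_le_dotProduct_mulVec hM
  exact ⟨⟨lam, w, hw, hwE, le_of_mul_le_mul_right (hμ ▸ hle _) hpos⟩,
    ⟨lam', w', hw', hwE', le_of_mul_le_mul_right (hμ ▸ hge _) hpos⟩⟩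

/-- Let `E` be symmetric positive-definite, `Ă` a real `n×n` matrix with `E Ă` symmetric,
and `G` an `n×k` matrix of full column rank.  Then every eigenvalue `μ` of the reduced
generalized eigenproblem `(Gᵀ E Ă G) v = μ (Gᵀ E G) v` lies between the smallest and the
largest eigenvalue of the full generalized eigenproblem `E Ă w = λ E w`: there exist full
eigenvalues `λ ≥ μ` and `λ' ≤ μ`.  In particular the largest reduced eigenvalue is at most
the largest full eigenvalue, and the smallest reduced eigenvalue is at least the smallest
full eigenvalue. -/
theorem reduced_eigenvalues_bounded_by_full
    {n k : ℕ} (E A : Matrix (Fin n) (Fin n) ℝ) (G : Matrix (Fin n) (Fin k) ℝ)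
    (hE : E.PosDef) (hEsymm : E.IsSymm) (hEA : (E * A).IsSymm)
    (hG : ∀ u : Fin k → ℝ, G.mulVec u = 0 → u = 0) :
    ∀ (μ : ℝ) (v : Fin k → ℝ), v ≠ 0 →
      (Gᵀ * E * A * G).mulVec v = μ • (Gᵀ * E * G).mulVec v →
      (∃ (lam : ℝ) (w : Fin n → ℝ), w ≠ 0 ∧ (E * A).mulVec w = lam • E.mulVec w ∧ μ ≤ lam) ∧
      (∃ (lam' : ℝ) (w' : Fin n → ℝ), w' ≠ 0 ∧ (E * A).mulVec w' = lam' • E.mulVec w' ∧ lam' ≤ μ) :=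
  reduced_eigenvalues_bounded_by_full_general E A G hE hEA hG
end

section
/- The 4×4 plane-strain compliance matrix S_plane is symmetric, and it is positive-definite provided c₁₁ > 0, c₅₅ > 0, M > 0, and c₁₁c₃₃ − c₁₃² > 0. -/
/-!
Completing squares in the quadratic form of `S_plane`: with `y₁ = x₁ + α₁x₄`, `y₂ = x₂ + α₃x₄`,
`xᵀ S_plane x = (c₁₁y₂ − c₁₃y₁)² / (c₁₁d) + y₁² / c₁₁ + x₃² / c₅₅ + x₄² / M`.
So `S_plane = Pᵀ D P`, where the rows of `P` are these four linear forms (`det P = −c₁₁ ≠ 0`) and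
`D = diag(1/(c₁₁d), 1/c₁₁, 1/c₅₅, 1/M)` is positive definite; positive-definiteness, which over `ℝ`
includes symmetry, is preserved by congruence with an invertible matrix.
-/

open Matrix

def planeStrainFactor (c11 c13 a1 a3 : ℝ) : Matrix (Fin 4) (Fin 4) ℝ :=
  !![-c13, c11, 0, a3 * c11 - a1 * c13;
     1, 0, 0, a1;
     0, 0, 1, 0;
     0, 0, 0, 1]

theorem det_planeStrainFactor (c11 c13 a1 a3 : ℝ) :
    (planeStrainFactor c11 c13 a1 a3).det = -c11 := by
  simp [planeStrainFactor, det_succ_row_zero, Fin.sum_univ_succ, Fin.succAbove]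

theorem splane_eq_star_mul_diagonal_mul {c11 c13 c33 d : ℝ} (c55 a1 a3 M : ℝ)
    (hd : d = c11 * c33 - c13 ^ 2) (hc11 : c11 ≠ 0) (hd0 : d ≠ 0) :
    !![c33/d, -c13/d, 0, (a1*c33 - a3*c13)/d;
       -c13/d, c11/d, 0, (a3*c11 - a1*c13)/d;
       0, 0, 1/c55, 0;
       (a1*c33 - a3*c13)/d, (a3*c11 - a1*c13)/d, 0,
         1/M + (a1^2*c33 + a3^2*c11 - 2*a1*a3*c13)/d] =
      star (planeStrainFactor c11 c13 a1 a3) *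
        diagonal ![1 / (c11 * d), 1 / c11, 1 / c55, 1 / M] *
        planeStrainFactor c11 c13 a1 a3 := by
  ext i j
  fin_cases i <;> fin_cases j <;>
    simp [planeStrainFactor, mul_apply, Fin.sum_univ_four] <;> field_simp <;> rw [hd] <;> ring

/-- The 4×4 plane-strain compliance matrix `S_plane` is symmetric, and it is
positive-definite provided `c₁₁ > 0`, `c₅₅ > 0`, `M > 0`, and `c₁₁c₃₃ − c₁₃² > 0`. -/
theorem splane_symm_posDef
    (c11 c13 c33 c55 a1 a3 M d : ℝ)
    (hd : d = c11 * c33 - c13 ^ 2)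
    (hc11 : 0 < c11) (hc55 : 0 < c55) (hM : 0 < M) (hdpos : 0 < d)
    (S : Matrix (Fin 4) (Fin 4) ℝ)
    (hS : S = !![c33/d, -c13/d, 0, (a1*c33 - a3*c13)/d;
                 -c13/d, c11/d, 0, (a3*c11 - a1*c13)/d;
                 0, 0, 1/c55, 0;
                 (a1*c33 - a3*c13)/d, (a3*c11 - a1*c13)/d, 0,
                   1/M + (a1^2*c33 + a3^2*c11 - 2*a1*a3*c13)/d]) :
    S.IsSymm ∧ S.PosDef := by
  have hP : IsUnit (planeStrainFactor c11 c13 a1 a3) := by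
    rw [isUnit_iff_isUnit_det, det_planeStrainFactor]
    exact (neg_ne_zero.mpr hc11.ne').isUnit
  have hD : (diagonal ![1 / (c11 * d), 1 / c11, 1 / c55, 1 / M]).PosDef := by
    rw [posDef_diagonal_iff]
    intro i
    fin_cases i <;> simp [hc11, hc55, hM, hdpos]
  have hS_posDef : S.PosDef := by
    rw [hS, splane_eq_star_mul_diagonal_mul c55 a1 a3 M hd hc11.ne' hdpos.ne']
    exact hP.posDef_star_left_conjugate_iff.mpr hD
  exact ⟨isHermitian_iff_isSymm.mp hS_posDef.isHermitian, hS_posDef⟩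
end
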